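/- The plane-fronted metric is Ricci flat (all components of the Ricci tensor vanish identically on ℝ^n) if and only if there exists a function F : ℝ^n → ℝ such that both equations hold identically: ∂_α(∂_0 h) = F k_α for all α, and Σ_{α,β} g^{αβ} ∂_α∂_β h = 2F. -/

import Mathlib

noncomputable section

/-- Partial derivative of a function on `ℝ^n` in the `μ`-th coordinate direction. -/
def pd {n : ℕ} (μ : Fin n) (f : (Fin n → ℝ) → ℝ) : (Fin n → ℝ) → ℝ :=
  fun p => fderiv ℝ f p (Pi.single μ 1)

/-- Embedding of a transverse index `a ∈ {0,…,m-1}` as the coordinate index `a+2`. -/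
def tIdx {m : ℕ} (a : Fin m) : Fin (m + 2) := a.succ.succ

/-- Covariant components `g_{αβ}` of the plane-fronted metric. -/
def gLow (m : ℕ) (η : Matrix (Fin m) (Fin m) ℝ) (h : (Fin (m + 2) → ℝ) → ℝ)
    (p : Fin (m + 2) → ℝ) (α β : Fin (m + 2)) : ℝ :=
  (if (α = 0 ∧ β = 1) ∨ (α = 1 ∧ β = 0) then 1 else 0)
    + (if α = 1 ∧ β = 1 then 2 * h p else 0)
    + ∑ a : Fin m, ∑ b : Fin m, if α = tIdx a ∧ β = tIdx b then η a b else 0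

/-- Contravariant components `g^{αβ}` of the plane-fronted metric. -/
def gUp (m : ℕ) (ηinv : Matrix (Fin m) (Fin m) ℝ) (h : (Fin (m + 2) → ℝ) → ℝ)
    (p : Fin (m + 2) → ℝ) (α β : Fin (m + 2)) : ℝ :=
  (if (α = 0 ∧ β = 1) ∨ (α = 1 ∧ β = 0) then 1 else 0)
    + (if α = 0 ∧ β = 0 then -(2 * h p) else 0)
    + ∑ a : Fin m, ∑ b : Fin m, if α = tIdx a ∧ β = tIdx b then ηinv a b else 0

/-- Christoffel symbols `Γ^α_{βγ}` of the plane-fronted metric. -/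
def chr (m : ℕ) (η ηinv : Matrix (Fin m) (Fin m) ℝ) (h : (Fin (m + 2) → ℝ) → ℝ)
    (p : Fin (m + 2) → ℝ) (α β γ : Fin (m + 2)) : ℝ :=
  (1 / 2) * ∑ δ : Fin (m + 2), gUp m ηinv h p α δ *
    (pd β (fun q => gLow m η h q δ γ) p + pd γ (fun q => gLow m η h q δ β) p
      - pd δ (fun q => gLow m η h q β γ) p)

/-- Riemann curvature tensor `R^α_{βγδ}` of the plane-fronted metric. -/
def riem (m : ℕ) (η ηinv : Matrix (Fin m) (Fin m) ℝ) (h : (Fin (m + 2) → ℝ) → ℝ)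
    (p : Fin (m + 2) → ℝ) (α β γ δ : Fin (m + 2)) : ℝ :=
  pd γ (fun q => chr m η ηinv h q α δ β) p - pd δ (fun q => chr m η ηinv h q α γ β) p
    + ∑ ε : Fin (m + 2), (chr m η ηinv h p α γ ε * chr m η ηinv h p ε δ β
      - chr m η ηinv h p α δ ε * chr m η ηinv h p ε γ β)

/-- Ricci tensor `R_{βδ}` of the plane-fronted metric. -/
def ricci (m : ℕ) (η ηinv : Matrix (Fin m) (Fin m) ℝ) (h : (Fin (m + 2) → ℝ) → ℝ)
    (p : Fin (m + 2) → ℝ) (β δ : Fin (m + 2)) : ℝ :=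
  ∑ α : Fin (m + 2), riem m η ηinv h p α β α δ

/-- Contravariant components `k^α = δ^α_0` of the null vector `k`. -/
def kUp {m : ℕ} (α : Fin (m + 2)) : ℝ := if α = 0 then 1 else 0

/-- Covariant components `k_α = δ^1_α` of the null vector `k`. -/
def kDown {m : ℕ} (α : Fin (m + 2)) : ℝ := if α = 1 then 1 else 0

/-- Covariant derivative `D_α k_β = −Σ_γ Γ^γ_{αβ} k_γ` of the constant-component
null covector `k`. -/
def covDk (m : ℕ) (η ηinv : Matrix (Fin m) (Fin m) ℝ) (h : (Fin (m + 2) → ℝ) → ℝ)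
    (p : Fin (m + 2) → ℝ) (α β : Fin (m + 2)) : ℝ :=
  - ∑ γ : Fin (m + 2), chr m η ηinv h p γ α β * kDown γ


/-! ### Auxiliary lemmas -/

section Aux

variable {n : ℕ} {h f g : (Fin n → ℝ) → ℝ} {p : Fin n → ℝ} {μ ν : Fin n}

lemma contDiff_pd (hh : ContDiff ℝ (⊤ : ℕ∞) h) (μ : Fin n) : ContDiff ℝ (⊤ : ℕ∞) (pd μ h) :=
  (hh.fderiv_right (by simp)).clm_apply contDiff_const

lemma pd_comm (hh : ContDiff ℝ (⊤ : ℕ∞) h) (μ ν : Fin n) (p : Fin n → ℝ) :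
    pd μ (pd ν h) p = pd ν (pd μ h) p := by
  have hd : Differentiable ℝ h := hh.differentiable (by simp)
  have hd2 : Differentiable ℝ (fderiv ℝ h) := (hh.fderiv_right (m := (⊤ : ℕ∞)) (by simp)).differentiable (by simp)
  have key : ∀ κ lam : Fin n, pd κ (pd lam h) p
      = fderiv ℝ (fderiv ℝ h) p (Pi.single κ 1) (Pi.single lam 1) := by
    intro κ lam
    show fderiv ℝ (fun q => fderiv ℝ h q (Pi.single lam 1)) p (Pi.single κ 1) = _
    rw [fderiv_clm_apply (hd2 p) (differentiableAt_const _)]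
    simp
  rw [key, key]
  exact second_derivative_symmetric (fun y => (hd y).hasFDerivAt) ((hd2 p).hasFDerivAt) _ _

lemma pd_const (μ : Fin n) (c : ℝ) (p : Fin n → ℝ) : pd μ (fun _ => c) p = 0 := by
  simp [pd]

lemma pd_add (hf : DifferentiableAt ℝ f p) (hg : DifferentiableAt ℝ g p) :
    pd μ (fun q => f q + g q) p = pd μ f p + pd μ g p := by
  simp [pd, fderiv_fun_add hf hg]

lemma pd_sub (hf : DifferentiableAt ℝ f p) (hg : DifferentiableAt ℝ g p) :
    pd μ (fun q => f q - g q) p = pd μ f p - pd μ g p := by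
  simp [pd, fderiv_fun_sub hf hg]

lemma pd_neg : pd μ (fun q => -f q) p = - pd μ f p := by
  simp [pd, fderiv_neg]

lemma pd_mul (hf : DifferentiableAt ℝ f p) (hg : DifferentiableAt ℝ g p) :
    pd μ (fun q => f q * g q) p = f p * pd μ g p + g p * pd μ f p := by
  simp [pd, fderiv_fun_mul hf hg]

lemma pd_cmul (c : ℝ) (hf : DifferentiableAt ℝ f p) :
    pd μ (fun q => c * f q) p = c * pd μ f p := by
  simp [pd, fderiv_const_mul hf]

lemma pd_sum {ι : Type*} (s : Finset ι) (F : ι → (Fin n → ℝ) → ℝ)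
    (hF : ∀ i ∈ s, DifferentiableAt ℝ (F i) p) :
    pd μ (fun q => ∑ i ∈ s, F i q) p = ∑ i ∈ s, pd μ (F i) p := by
  simp [pd, fderiv_fun_sum hF]

end Aux

section Idx

variable {m : ℕ}

lemma tIdx_ne_zero (a : Fin m) : tIdx a ≠ 0 := Fin.succ_ne_zero _
lemma zero_ne_tIdx (a : Fin m) : (0 : Fin (m+2)) ≠ tIdx a := (tIdx_ne_zero a).symm
lemma tIdx_ne_one (a : Fin m) : tIdx a ≠ 1 := by
  intro hcon
  have h2 : a.succ.succ = Fin.succ 0 := by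
    rw [Fin.succ_zero_eq_one]; exact hcon
  exact Fin.succ_ne_zero a (Fin.succ_injective _ h2)
lemma one_ne_tIdx (a : Fin m) : (1 : Fin (m+2)) ≠ tIdx a := (tIdx_ne_one a).symm
lemma tIdx_inj {a b : Fin m} : tIdx a = tIdx b ↔ a = b := by
  constructor
  · intro hcon
    exact Fin.succ_injective _ (Fin.succ_injective _ hcon)
  · rintro rfl; rfl
lemma fin_zero_ne_one : (0 : Fin (m+2)) ≠ 1 := by simp [Fin.ext_iff]
lemma fin_one_ne_zero : (1 : Fin (m+2)) ≠ 0 := fin_zero_ne_one.symm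
lemma sum_fin_add_two {M : Type*} [AddCommMonoid M] (f : Fin (m+2) → M) :
    ∑ α : Fin (m+2), f α = f 0 + f 1 + ∑ a : Fin m, f (tIdx a) := by
  rw [Fin.sum_univ_succ, Fin.sum_univ_succ]
  simp [tIdx, add_assoc, Fin.succ_zero_eq_one]

end Idx

section Comp

variable {m : ℕ} (η ηinv : Matrix (Fin m) (Fin m) ℝ) (h : (Fin (m + 2) → ℝ) → ℝ)
  (p : Fin (m+2) → ℝ)

lemma gUp_00 : gUp m ηinv h p 0 0 = -(2 * h p) := by
  simp [gUp, fin_zero_ne_one, zero_ne_tIdx]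
lemma gUp_01 : gUp m ηinv h p 0 1 = 1 := by
  simp [gUp, fin_zero_ne_one, zero_ne_tIdx, one_ne_tIdx]
lemma gUp_10 : gUp m ηinv h p 1 0 = 1 := by
  simp [gUp, fin_one_ne_zero, zero_ne_tIdx, one_ne_tIdx]
lemma gUp_11 : gUp m ηinv h p 1 1 = 0 := by
  simp [gUp, fin_one_ne_zero, one_ne_tIdx]
lemma gUp_0t (b : Fin m) : gUp m ηinv h p 0 (tIdx b) = 0 := by
  simp [gUp, fin_zero_ne_one, zero_ne_tIdx, tIdx_ne_zero, tIdx_ne_one]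
lemma gUp_t0 (a : Fin m) : gUp m ηinv h p (tIdx a) 0 = 0 := by
  simp [gUp, tIdx_ne_zero, tIdx_ne_one, zero_ne_tIdx]
lemma gUp_1t (b : Fin m) : gUp m ηinv h p 1 (tIdx b) = 0 := by
  simp [gUp, fin_one_ne_zero, one_ne_tIdx, tIdx_ne_zero]
lemma gUp_t1 (a : Fin m) : gUp m ηinv h p (tIdx a) 1 = 0 := by
  simp [gUp, tIdx_ne_zero, tIdx_ne_one, one_ne_tIdx]
lemma gUp_tt (a b : Fin m) : gUp m ηinv h p (tIdx a) (tIdx b) = ηinv a b := by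
  simp [gUp, tIdx_ne_zero, tIdx_ne_one, tIdx_inj, ite_and, Finset.sum_ite_eq]

lemma pd_gLow (hh : ContDiff ℝ (⊤ : ℕ∞) h) (μ δ γ : Fin (m+2)) :
    pd μ (fun q => gLow m η h q δ γ) p
      = if δ = 1 ∧ γ = 1 then 2 * pd μ h p else 0 := by
  by_cases hc : δ = 1 ∧ γ = 1
  · obtain ⟨rfl, rfl⟩ := hc
    have e : (fun q => gLow m η h q 1 1) = fun q => 2 * h q := by
      funext q; simp [gLow, fin_one_ne_zero, one_ne_tIdx]
    rw [e, if_pos ⟨rfl, rfl⟩, pd_cmul _ ((hh.differentiable (by simp)) p)]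
  · have e : (fun q => gLow m η h q δ γ) = fun _ => gLow m η h p δ γ := by
      funext q; simp only [gLow, if_neg hc]
    rw [e, if_neg hc, pd_const]

end Comp


section Chr

variable {m : ℕ} (η ηinv : Matrix (Fin m) (Fin m) ℝ) (h : (Fin (m + 2) → ℝ) → ℝ)
  (p : Fin (m+2) → ℝ)

lemma chr_one (hh : ContDiff ℝ (⊤ : ℕ∞) h) (β γ : Fin (m+2)) :
    chr m η ηinv h p 1 β γ = if β = 1 ∧ γ = 1 then -pd 0 h p else 0 := by
  unfold chr
  rw [sum_fin_add_two]
  simp only [pd_gLow η h p hh, gUp_10, gUp_11, gUp_1t]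
  by_cases hc : β = 1 ∧ γ = 1 <;>
    simp [hc, fin_zero_ne_one, fin_one_ne_zero] <;> ring

lemma chr_zero (hh : ContDiff ℝ (⊤ : ℕ∞) h) (β γ : Fin (m+2)) :
    chr m η ηinv h p 0 β γ
      = (if γ = 1 then pd β h p else 0) + (if β = 1 then pd γ h p else 0)
        - (if β = 1 ∧ γ = 1 then pd 1 h p - 2 * h p * pd 0 h p else 0) := by
  unfold chr
  rw [sum_fin_add_two]
  simp only [pd_gLow η h p hh, gUp_00, gUp_01, gUp_0t]
  by_cases hβ : β = 1 <;> by_cases hγ : γ = 1 <;>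
    simp [hβ, hγ, fin_zero_ne_one, fin_one_ne_zero] <;> ring

lemma chr_t (hh : ContDiff ℝ (⊤ : ℕ∞) h) (a : Fin m) (β γ : Fin (m+2)) :
    chr m η ηinv h p (tIdx a) β γ
      = if β = 1 ∧ γ = 1 then -(∑ b : Fin m, ηinv a b * pd (tIdx b) h p) else 0 := by
  unfold chr
  rw [sum_fin_add_two]
  simp only [pd_gLow η h p hh, gUp_t0, gUp_t1, gUp_tt]
  by_cases hc : β = 1 ∧ γ = 1
  · simp [hc, fin_zero_ne_one, fin_one_ne_zero, tIdx_ne_one, Finset.mul_sum]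
    exact Finset.sum_congr rfl fun b _ => by ring
  · simp [hc, fin_zero_ne_one, fin_one_ne_zero, tIdx_ne_one]

end Chr


section PdChr

variable {m : ℕ} (η ηinv : Matrix (Fin m) (Fin m) ℝ) (h : (Fin (m + 2) → ℝ) → ℝ)
  (p : Fin (m+2) → ℝ)

lemma pd_chr_one (hh : ContDiff ℝ (⊤ : ℕ∞) h) (μ b c : Fin (m+2)) :
    pd μ (fun q => chr m η ηinv h q 1 b c) p
      = if b = 1 ∧ c = 1 then -pd μ (pd 0 h) p else 0 := by
  have e : (fun q => chr m η ηinv h q 1 b c)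
      = fun q => if b = 1 ∧ c = 1 then -pd 0 h q else 0 :=
    funext fun q => chr_one η ηinv h q hh b c
  rw [e]
  by_cases hc : b = 1 ∧ c = 1
  · simp only [if_pos hc]; exact pd_neg
  · simp only [if_neg hc]; exact pd_const μ 0 p

lemma pd_chr_t (hh : ContDiff ℝ (⊤ : ℕ∞) h) (a : Fin m) (μ b c : Fin (m+2)) :
    pd μ (fun q => chr m η ηinv h q (tIdx a) b c) p
      = if b = 1 ∧ c = 1 then -(∑ b' : Fin m, ηinv a b' * pd μ (pd (tIdx b') h) p)
        else 0 := by
  have e : (fun q => chr m η ηinv h q (tIdx a) b c)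
      = fun q => if b = 1 ∧ c = 1 then -(∑ b' : Fin m, ηinv a b' * pd (tIdx b') h q)
        else 0 :=
    funext fun q => chr_t η ηinv h q hh a b c
  rw [e]
  by_cases hc : b = 1 ∧ c = 1
  · simp only [if_pos hc]
    rw [show (fun q => -(∑ b' : Fin m, ηinv a b' * pd (tIdx b') h q))
          = fun q => -((fun q => ∑ b' : Fin m, ηinv a b' * pd (tIdx b') h q) q) from rfl,
      pd_neg, pd_sum (μ := μ) Finset.univ (fun b' q => ηinv a b' * pd (tIdx b') h q)
        (fun b' _ => (((contDiff_pd hh (tIdx b')).differentiable (by simp)) p).const_mul _)]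
    congr 1
    exact Finset.sum_congr rfl fun b' _ =>
      pd_cmul _ (((contDiff_pd hh (tIdx b')).differentiable (by simp)) p)
  · simp only [if_neg hc]; exact pd_const μ 0 p

lemma pd_chr_zero (hh : ContDiff ℝ (⊤ : ℕ∞) h) (μ b c : Fin (m+2)) :
    pd μ (fun q => chr m η ηinv h q 0 b c) p
      = (if c = 1 then pd μ (pd b h) p else 0) + (if b = 1 then pd μ (pd c h) p else 0)
        - (if b = 1 ∧ c = 1 then
            pd μ (pd 1 h) p - 2 * (h p * pd μ (pd 0 h) p + pd 0 h p * pd μ h p)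
          else 0) := by
  have hD : ∀ ν : Fin (m+2), Differentiable ℝ (pd ν h) :=
    fun ν => (contDiff_pd hh ν).differentiable (by simp)
  have hdh : Differentiable ℝ h := hh.differentiable (by simp)
  by_cases hb : b = 1 <;> by_cases hcc : c = 1
  · subst hb; subst hcc
    have e : (fun q => chr m η ηinv h q 0 1 1)
        = fun q => (fun q => pd 1 h q + pd 1 h q) q
            - (fun q => pd 1 h q - (fun q => 2 * h q) q * pd 0 h q) q := by
      funext q; rw [chr_zero η ηinv h q hh]; simp
    rw [e, pd_sub (((hD 1) p).fun_add ((hD 1) p))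
        (((hD 1) p).fun_sub (((hdh p).const_mul 2).fun_mul ((hD 0) p))),
      pd_add ((hD 1) p) ((hD 1) p),
      pd_sub ((hD 1) p) (((hdh p).const_mul 2).fun_mul ((hD 0) p)),
      pd_mul ((hdh p).const_mul 2) ((hD 0) p),
      pd_cmul 2 (hdh p)]
    simp only [if_pos rfl, and_self, ite_true]
    ring
  · have hbc : ¬ (b = 1 ∧ c = 1) := fun hx => hcc hx.2
    have e : (fun q => chr m η ηinv h q 0 b c) = fun q => pd c h q := by
      funext q; rw [chr_zero η ηinv h q hh]; simp [hb, hcc, hbc]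
    rw [e]
    simp [hb, hcc, hbc]
  · have hbc : ¬ (b = 1 ∧ c = 1) := fun hx => hb hx.1
    have e : (fun q => chr m η ηinv h q 0 b c) = fun q => pd b h q := by
      funext q; rw [chr_zero η ηinv h q hh]; simp [hb, hcc, hbc]
    rw [e]
    simp [hb, hcc, hbc]
  · have hbc : ¬ (b = 1 ∧ c = 1) := fun hx => hb hx.1
    have e : (fun q => chr m η ηinv h q 0 b c) = fun _ => (0:ℝ) := by
      funext q; rw [chr_zero η ηinv h q hh]; simp [hb, hcc, hbc]
    rw [e]
    simp [hb, hcc, hbc, pd_const]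

end PdChr


section Riem

variable {m : ℕ} (η ηinv : Matrix (Fin m) (Fin m) ℝ) (h : (Fin (m + 2) → ℝ) → ℝ)
  (p : Fin (m+2) → ℝ)

lemma riem_0 (hh : ContDiff ℝ (⊤ : ℕ∞) h) (β δ : Fin (m+2)) :
    riem m η ηinv h p 0 β 0 δ
      = (if β = 1 then pd 0 (pd δ h) p else 0) + (if δ = 1 then pd 0 (pd β h) p else 0)
        - (if β = 1 then pd δ (pd 0 h) p else 0)
        - (if β = 1 ∧ δ = 1 then pd 0 (pd 1 h) p - 2 * h p * pd 0 (pd 0 h) p else 0) := by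
  unfold riem
  rw [pd_chr_zero η ηinv h p hh 0 δ β, pd_chr_zero η ηinv h p hh δ 0 β, sum_fin_add_two]
  simp only [chr_zero η ηinv h p hh, chr_one η ηinv h p hh, chr_t η ηinv h p hh]
  by_cases hβ : β = 1 <;> by_cases hδ : δ = 1 <;>
    simp [hβ, hδ, fin_zero_ne_one, fin_one_ne_zero, tIdx_ne_one, tIdx_ne_zero,
      one_ne_tIdx, zero_ne_tIdx] <;> ring

lemma riem_1 (hh : ContDiff ℝ (⊤ : ℕ∞) h) (β δ : Fin (m+2)) :
    riem m η ηinv h p 1 β 1 δ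
      = (if β = 1 then pd δ (pd 0 h) p else 0)
        - (if β = 1 ∧ δ = 1 then pd 1 (pd 0 h) p else 0) := by
  unfold riem
  rw [pd_chr_one η ηinv h p hh 1 δ β, pd_chr_one η ηinv h p hh δ 1 β, sum_fin_add_two]
  simp only [chr_zero η ηinv h p hh, chr_one η ηinv h p hh, chr_t η ηinv h p hh]
  by_cases hβ : β = 1 <;> by_cases hδ : δ = 1 <;>
    simp [hβ, hδ, fin_zero_ne_one, fin_one_ne_zero, tIdx_ne_one, tIdx_ne_zero,
      one_ne_tIdx, zero_ne_tIdx] <;> ring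

lemma riem_t (hh : ContDiff ℝ (⊤ : ℕ∞) h) (a : Fin m) (β δ : Fin (m+2)) :
    riem m η ηinv h p (tIdx a) β (tIdx a) δ
      = if β = 1 ∧ δ = 1
          then -(∑ b : Fin m, ηinv a b * pd (tIdx a) (pd (tIdx b) h) p) else 0 := by
  unfold riem
  rw [pd_chr_t η ηinv h p hh a (tIdx a) δ β, pd_chr_t η ηinv h p hh a δ (tIdx a) β,
    sum_fin_add_two]
  simp only [chr_zero η ηinv h p hh, chr_one η ηinv h p hh, chr_t η ηinv h p hh]
  by_cases hβ : β = 1 <;> by_cases hδ : δ = 1 <;>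
    simp [hβ, hδ, fin_zero_ne_one, fin_one_ne_zero, tIdx_ne_one, tIdx_ne_zero,
      one_ne_tIdx, zero_ne_tIdx] <;> ring

lemma ricci_eq (hh : ContDiff ℝ (⊤ : ℕ∞) h) (β δ : Fin (m+2)) :
    ricci m η ηinv h p β δ
      = (if β = 1 then pd 0 (pd δ h) p else 0) + (if δ = 1 then pd 0 (pd β h) p else 0)
        - (if β = 1 ∧ δ = 1 then
            2 * pd 0 (pd 1 h) p - 2 * h p * pd 0 (pd 0 h) p
              + ∑ a : Fin m, ∑ b : Fin m, ηinv a b * pd (tIdx a) (pd (tIdx b) h) p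
          else 0) := by
  unfold ricci
  rw [sum_fin_add_two, riem_0 η ηinv h p hh β δ, riem_1 η ηinv h p hh β δ]
  simp only [riem_t η ηinv h p hh]
  by_cases hβ : β = 1 <;> by_cases hδ : δ = 1 <;>
    simp [hβ, hδ, Finset.sum_neg_distrib]
  · rw [pd_comm hh 1 0 p]
    ring

end Riem


section Contr

variable {m : ℕ} (ηinv : Matrix (Fin m) (Fin m) ℝ) (h : (Fin (m + 2) → ℝ) → ℝ)
  (p : Fin (m+2) → ℝ)

lemma contraction :
    (∑ α : Fin (m+2), ∑ β : Fin (m+2), gUp m ηinv h p α β * pd α (pd β h) p)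
      = -(2 * h p) * pd 0 (pd 0 h) p + pd 0 (pd 1 h) p + pd 1 (pd 0 h) p
        + ∑ a : Fin m, ∑ b : Fin m, ηinv a b * pd (tIdx a) (pd (tIdx b) h) p := by
  simp only [sum_fin_add_two]
  simp [gUp_00, gUp_01, gUp_10, gUp_11, gUp_0t, gUp_t0, gUp_1t, gUp_t1, gUp_tt]

end Contr

/-- the plane-fronted metric is Ricci flat iff there is a function `F`
with `∂_α(∂_0 h) = F k_α` for all `α` and `Σ g^{αβ} ∂_α∂_β h = 2F`, identically. -/
theorem stmt9 (m : ℕ) (hm : 1 ≤ m) (η ηinv : Matrix (Fin m) (Fin m) ℝ)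
    (hηsymm : η.IsSymm) (hη : η * ηinv = 1) (hη' : ηinv * η = 1)
    (h : (Fin (m + 2) → ℝ) → ℝ) (hh : ContDiff ℝ (⊤ : ℕ∞) h) :
    (∀ (p : Fin (m + 2) → ℝ) (β δ : Fin (m + 2)), ricci m η ηinv h p β δ = 0)
      ↔ (∃ F : (Fin (m + 2) → ℝ) → ℝ,
          (∀ (p : Fin (m + 2) → ℝ) (α : Fin (m + 2)),
            pd α (pd (0 : Fin (m + 2)) h) p = F p * kDown α)
          ∧ (∀ p : Fin (m + 2) → ℝ,
              ∑ α : Fin (m + 2), ∑ β : Fin (m + 2),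
                gUp m ηinv h p α β * pd α (pd β h) p = 2 * F p)) := by
  constructor
  · intro hric
    refine ⟨pd 1 (pd 0 h), ?_, ?_⟩
    · intro p α
      by_cases hα : α = 1
      · subst hα; simp [kDown]
      · have h1 := hric p α 1
        rw [ricci_eq η ηinv h p hh α 1] at h1
        simp [hα, kDown] at h1 ⊢
        rw [pd_comm hh α 0 p]
        linarith
    · intro p
      rw [contraction ηinv h p]
      have h00 := hric p 0 1
      rw [ricci_eq η ηinv h p hh 0 1] at h00
      simp [fin_zero_ne_one] at h00
      have h11 := hric p 1 1
      rw [ricci_eq η ηinv h p hh 1 1] at h11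
      simp at h11
      have hc := pd_comm hh 0 1 p
      simp [h00] at h11 ⊢
      linarith
  · rintro ⟨F, hF1, hF2⟩ p β δ
    have h0 : ∀ α : Fin (m+2), α ≠ 1 → pd 0 (pd α h) p = 0 := by
      intro α hα
      have := hF1 p α
      rw [pd_comm hh 0 α p]
      simpa [kDown, hα] using this
    have h00 := h0 0 fin_zero_ne_one
    have h10 : pd 1 (pd 0 h) p = F p := by simpa [kDown] using hF1 p 1
    have hctr := hF2 p
    rw [contraction ηinv h p] at hctr
    have hc : pd 0 (pd 1 h) p = pd 1 (pd 0 h) p := pd_comm hh 0 1 p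
    rw [ricci_eq η ηinv h p hh β δ]
    by_cases hβ : β = 1 <;> by_cases hδ : δ = 1
    · subst hβ; subst hδ
      simp [h00, hc, h10] at hctr ⊢
      linarith
    · simp [hβ, hδ, h0 δ hδ]
    · simp [hβ, hδ, h0 β hβ]
    · simp [hβ, hδ]
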